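/- arXiv:1802.10320 — 2 statements merged into one kernel-verified Lean document; each statement's English description precedes it below -/
import Mathlib

section
/- Let F_opt ∈ ℂ^{n×k}, S ∈ ℂ^{n×m}, C ∈ ℂ^{m×r} with C^H C = I_r, α ∈ ℝ, and F_DD ∈ ℂ^{r×k} with F_DD^H F_DD = α²·(1/α²)I_k being semi-unitary (F_DD^H F_DD = I_k, k ≤ r). Then ‖F_opt − α·S C F_DD‖_F² ≤ ‖F_opt‖_F² − 2α·Re tr(F_DD F_opt^H S C) + α²‖S‖_F². -/
/-!
Writing `‖A‖_F² = Re tr(Aᴴ A)` and expanding the square gives the claim with `‖S C F_DD‖_F²`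
in place of `‖S‖_F²`. Right multiplication by a matrix `F` with `Fᴴ F = I` cannot increase the
Frobenius norm: `P = F Fᴴ` is an orthogonal projection, and Pythagoras gives
`‖M‖_F² = ‖M F‖_F² + ‖M - M P‖_F²`. Applying this to `F_DD` and then to `C` yields
`‖S C F_DD‖_F² ≤ ‖S‖_F²`.
-/

open Matrix

/-- Squared Frobenius norm of a complex matrix. -/
noncomputable def frobSq {m n : Type*} [Fintype m] [Fintype n] (A : Matrix m n ℂ) : ℝ :=
  ∑ i, ∑ j, ‖A i j‖ ^ 2

section FrobeniusSq

variable {m n p : Type*} [Fintype m] [Fintype n] [Fintype p]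

lemma frobSq_nonneg (A : Matrix m n ℂ) : 0 ≤ frobSq A :=
  Finset.sum_nonneg fun _ _ => Finset.sum_nonneg fun _ _ => sq_nonneg _

lemma frobSq_eq_re_trace (A : Matrix m n ℂ) : frobSq A = (trace (Aᴴ * A)).re := by
  rw [frobSq, trace, Finset.sum_comm]
  simp [diag, mul_apply, Complex.re_sum, ← Complex.normSq_eq_norm_sq, Complex.normSq_apply]

lemma re_trace_conjTranspose_mul_comm (A B : Matrix m n ℂ) :
    (trace (Aᴴ * B)).re = (trace (Bᴴ * A)).re := by
  rw [← conjTranspose_conjTranspose A, ← conjTranspose_mul, trace_conjTranspose,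
    conjTranspose_conjTranspose, Complex.star_def, Complex.conj_re]

lemma frobSq_sub_smul (A B : Matrix m n ℂ) (α : ℝ) :
    frobSq (A - (α : ℂ) • B) =
      frobSq A - 2 * α * (trace (Bᴴ * A)).re + α ^ 2 * frobSq B := by
  have hαB : ((α : ℂ) • B)ᴴ = (α : ℂ) • Bᴴ := by simp [conjTranspose_smul]
  simp only [frobSq_eq_re_trace, conjTranspose_sub, hαB, Matrix.sub_mul, Matrix.mul_sub,
    trace_sub, Matrix.smul_mul, Matrix.mul_smul, trace_smul, smul_eq_mul, Complex.sub_re,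
    Complex.re_ofReal_mul, re_trace_conjTranspose_mul_comm A B]
  ring

lemma frobSq_mul_eq_re_trace (M : Matrix m n ℂ) (F : Matrix n p ℂ) :
    frobSq (M * F) = (trace (Mᴴ * M * (F * Fᴴ))).re := by
  rw [frobSq_eq_re_trace, conjTranspose_mul, Matrix.mul_assoc, trace_mul_comm]
  simp only [Matrix.mul_assoc]

lemma frobSq_mul_add_frobSq_sub [DecidableEq p] (M : Matrix m n ℂ) (F : Matrix n p ℂ)
    (hF : Fᴴ * F = 1) : frobSq (M * F) + frobSq (M - M * (F * Fᴴ)) = frobSq M := by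
  have hP : (F * Fᴴ) * (F * Fᴴ)ᴴ = F * Fᴴ := by
    rw [conjTranspose_mul, conjTranspose_conjTranspose, Matrix.mul_assoc,
      ← Matrix.mul_assoc Fᴴ, hF, Matrix.one_mul]
  have hcross : (trace ((M * (F * Fᴴ))ᴴ * M)).re = frobSq (M * F) := by
    rw [re_trace_conjTranspose_mul_comm, frobSq_mul_eq_re_trace, Matrix.mul_assoc]
  have hproj : frobSq (M * (F * Fᴴ)) = frobSq (M * F) := by
    rw [frobSq_mul_eq_re_trace, hP, frobSq_mul_eq_re_trace]
  have := frobSq_sub_smul M (M * (F * Fᴴ)) 1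
  simp only [Complex.ofReal_one, one_smul, hcross, hproj] at this
  linarith

lemma frobSq_mul_le [DecidableEq p] (M : Matrix m n ℂ) (F : Matrix n p ℂ)
    (hF : Fᴴ * F = 1) : frobSq (M * F) ≤ frobSq M := by
  rw [← frobSq_mul_add_frobSq_sub M F hF]
  exact le_add_of_nonneg_right (frobSq_nonneg _)

end FrobeniusSq

theorem stmt_2_general (n m r k : ℕ)
    (Fopt : Matrix (Fin n) (Fin k) ℂ) (S : Matrix (Fin n) (Fin m) ℂ)
    (C : Matrix (Fin m) (Fin r) ℂ) (FDD : Matrix (Fin r) (Fin k) ℂ) (α : ℝ)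
    (hC : Cᴴ * C = 1) (hF : FDDᴴ * FDD = 1) :
    frobSq (Fopt - (α : ℂ) • (S * C * FDD)) ≤
      frobSq Fopt - 2 * α * (Matrix.trace (FDD * Foptᴴ * S * C)).re +
        α ^ 2 * frobSq S := by
  have htrace : (trace ((S * C * FDD)ᴴ * Fopt)).re = (trace (FDD * Foptᴴ * S * C)).re := by
    rw [← re_trace_conjTranspose_mul_comm, ← Matrix.mul_assoc, ← Matrix.mul_assoc,
      trace_mul_comm]
    simp only [Matrix.mul_assoc]
  have hnorm : frobSq (S * C * FDD) ≤ frobSq S :=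
    (frobSq_mul_le _ FDD hF).trans (frobSq_mul_le S C hC)
  rw [frobSq_sub_smul, htrace]
  gcongr

/-- Lemma 1 of the paper: with `Cᴴ C = I_r` and `F_DD` semi-unitary
(`F_DDᴴ F_DD = I_k`, `k ≤ r`),
`‖F_opt − α·S C F_DD‖_F² ≤ ‖F_opt‖_F² − 2α Re tr(F_DD F_optᴴ S C) + α²‖S‖_F²`. -/
theorem stmt_2 (n m r k : ℕ) (hk : k ≤ r)
    (Fopt : Matrix (Fin n) (Fin k) ℂ) (S : Matrix (Fin n) (Fin m) ℂ)
    (C : Matrix (Fin m) (Fin r) ℂ) (FDD : Matrix (Fin r) (Fin k) ℂ) (α : ℝ)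
    (hC : Cᴴ * C = 1) (hF : FDDᴴ * FDD = 1) :
    frobSq (Fopt - (α : ℂ) • (S * C * FDD)) ≤
      frobSq Fopt - 2 * α * (Matrix.trace (FDD * Foptᴴ * S * C)).re +
        α ^ 2 * frobSq S :=
  stmt_2_general n m r k Fopt S C FDD α hC hF
end

section
/- Let x ∈ ℝ^n and let S(α) denote the set {s ∈ {0,1}^n : s minimizes ‖x − αs‖²}. Then min_{α∈ℝ, s∈{0,1}^n} ‖x − αs‖² = min over the finite candidate set {prefix means of sorted negatives and suffix means of sorted positives restricted to their respective intervals, together with α giving s=0} of the piecewise-quadratic objective; in particular the joint minimum over (α, s) with s ranging over 2^n binary vectors is computable by examining at most n candidate values of α. -/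
/-!
For fixed `α` the objective decouples coordinatewise,
`min_s ‖x - α s‖² = ∑ⱼ min (xⱼ², (xⱼ - α)²)`, the minimum being attained when `s` is the indicator
of the active set `T = {j | (xⱼ - α)² ≤ xⱼ²}`. Keeping `T` but moving `α` to the mean of `x` over `T` can only
lower the cost, since the mean minimises the squared deviations. As `x` is sorted, the active set
is an initial segment of indices when `α ≤ 0` and a final one when `α ≥ 0`, so that mean is a
prefix or a suffix mean (or `0`, when `T` is empty).
-/

open Finset

theorem ciInf_eq_inf'_of_forall_exists_le {α β : Type*} [ConditionallyCompleteLinearOrder β]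
    {f : α → β} {s : Finset α} (hs : s.Nonempty) (h : ∀ a, ∃ b ∈ s, f b ≤ f a) :
    ⨅ a, f a = s.inf' hs f := by
  obtain ⟨b, -, hfb⟩ := s.exists_mem_eq_inf' hs f
  have : Nonempty α := ⟨b⟩
  have hle : ∀ a, s.inf' hs f ≤ f a := fun a =>
    let ⟨c, hc, hfc⟩ := h a
    (s.inf'_le f hc).trans hfc
  exact le_antisymm (hfb ▸ ciInf_le ⟨_, Set.forall_mem_range.mpr hle⟩ b) (le_ciInf hle)

theorem ciInf_sum_bool_eq_sum_min {ι : Type*} (I : Finset ι) (g : ι → Bool → ℝ) :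
    ⨅ s : ι → Bool, ∑ j ∈ I, g j (s j) = ∑ j ∈ I, min (g j false) (g j true) := by
  have hle : ∀ s : ι → Bool, ∑ j ∈ I, min (g j false) (g j true) ≤ ∑ j ∈ I, g j (s j) :=
    fun s => sum_le_sum fun j _ => by cases s j <;> simp
  have hbest : ∑ j ∈ I, g j (decide (g j true ≤ g j false)) =
      ∑ j ∈ I, min (g j false) (g j true) := by
    refine sum_congr rfl fun j _ => ?_
    by_cases h : g j true ≤ g j false
    · simp [h]
    · simp [h, (not_le.mp h).le]
  have hbdd : BddBelow (Set.range fun s : ι → Bool => ∑ j ∈ I, g j (s j)) :=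
    ⟨_, Set.forall_mem_range.mpr hle⟩
  exact le_antisymm (hbest ▸ ciInf_le hbdd fun j => decide (g j true ≤ g j false)) (le_ciInf hle)

theorem sum_sq_sub_mean_le {ι : Type*} (T : Finset ι) (x : ι → ℝ) (c : ℝ) :
    ∑ j ∈ T, (x j - (∑ j ∈ T, x j) / T.card) ^ 2 ≤ ∑ j ∈ T, (x j - c) ^ 2 := by
  set μ := (∑ j ∈ T, x j) / T.card with hμ
  have hsum : ∑ j ∈ T, x j = T.card * μ := by
    rcases T.eq_empty_or_nonempty with rfl | hT
    · simp
    · rw [hμ, mul_div_cancel₀]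
      exact_mod_cast hT.card_pos.ne'
  have key : ∑ j ∈ T, (x j - c) ^ 2 = ∑ j ∈ T, (x j - μ) ^ 2 + T.card * (μ - c) ^ 2 := by
    have h : ∀ j ∈ T, (x j - c) ^ 2 = (x j - μ) ^ 2 + ((2 * μ - 2 * c) * x j + (c ^ 2 - μ ^ 2)) :=
      fun j _ => by ring
    rw [sum_congr rfl h, sum_add_distrib, sum_add_distrib, ← mul_sum, sum_const, hsum,
      nsmul_eq_mul]
    ring
  rw [key]
  exact le_add_of_nonneg_right (mul_nonneg (Nat.cast_nonneg _) (sq_nonneg _))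

noncomputable section

variable {ι : Type*} (I : Finset ι) (x : ι → ℝ)

def binaryFitError (α : ℝ) : ℝ := ∑ j ∈ I, min (x j ^ 2) ((x j - α) ^ 2)

def activeSet (α : ℝ) : Finset ι := I.filter fun j => (x j - α) ^ 2 ≤ x j ^ 2

theorem binaryFitError_mean_activeSet_le (α : ℝ) :
    binaryFitError I x ((∑ j ∈ activeSet I x α, x j) / (activeSet I x α).card) ≤
      binaryFitError I x α := by
  set μ := (∑ j ∈ activeSet I x α, x j) / (activeSet I x α).card
  unfold binaryFitError
  rw [← sum_filter_add_sum_filter_not I (fun j => (x j - α) ^ 2 ≤ x j ^ 2),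
    ← sum_filter_add_sum_filter_not I (fun j => (x j - α) ^ 2 ≤ x j ^ 2)]
  refine add_le_add ?_ (sum_le_sum fun j hj => ?_)
  · calc ∑ j ∈ activeSet I x α, min (x j ^ 2) ((x j - μ) ^ 2)
        ≤ ∑ j ∈ activeSet I x α, (x j - μ) ^ 2 := sum_le_sum fun j _ => min_le_right _ _
      _ ≤ ∑ j ∈ activeSet I x α, (x j - α) ^ 2 := sum_sq_sub_mean_le _ x α
      _ = ∑ j ∈ activeSet I x α, min (x j ^ 2) ((x j - α) ^ 2) :=
          sum_congr rfl fun j hj => (min_eq_right (mem_filter.mp hj).2).symm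
  · rw [min_eq_left (le_of_not_ge (mem_filter.mp hj).2)]
    exact min_le_left _ _

end

theorem Finset.exists_filter_Icc_eq_Icc_of_lowerClosed {α : Type*} [LinearOrder α]
    [LocallyFiniteOrder α] {a b : α} {p : α → Prop} [DecidablePred p]
    (hp : ∀ j ∈ Icc a b, ∀ k ∈ Icc a b, k ≤ j → p j → p k) (hne : ((Icc a b).filter p).Nonempty) :
    ∃ c ∈ Icc a b, (Icc a b).filter p = Icc a c := by
  have hmax := mem_filter.mp (max'_mem _ hne)
  refine ⟨_, hmax.1, ?_⟩
  ext k
  simp only [mem_filter, mem_Icc]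
  constructor
  · rintro ⟨hk, hpk⟩
    exact ⟨hk.1, le_max' _ k (mem_filter.mpr ⟨mem_Icc.mpr hk, hpk⟩)⟩
  · rintro ⟨hak, hkm⟩
    have hkb := hkm.trans (mem_Icc.mp hmax.1).2
    exact ⟨⟨hak, hkb⟩, hp _ hmax.1 k (mem_Icc.mpr ⟨hak, hkb⟩) hkm hmax.2⟩

theorem Finset.exists_filter_Icc_eq_Icc_of_upperClosed {α : Type*} [LinearOrder α]
    [LocallyFiniteOrder α] {a b : α} {p : α → Prop} [DecidablePred p]
    (hp : ∀ j ∈ Icc a b, ∀ k ∈ Icc a b, j ≤ k → p j → p k) (hne : ((Icc a b).filter p).Nonempty) :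
    ∃ c ∈ Icc a b, (Icc a b).filter p = Icc c b := by
  have hmin := mem_filter.mp (min'_mem _ hne)
  refine ⟨_, hmin.1, ?_⟩
  ext k
  simp only [mem_filter, mem_Icc]
  constructor
  · rintro ⟨hk, hpk⟩
    exact ⟨min'_le _ k (mem_filter.mpr ⟨mem_Icc.mpr hk, hpk⟩), hk.2⟩
  · rintro ⟨hmk, hkb⟩
    have hak := (mem_Icc.mp hmin.1).1.trans hmk
    exact ⟨⟨hak, hkb⟩, hp _ hmin.1 k (mem_Icc.mpr ⟨hak, hkb⟩) hmk hmin.2⟩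

theorem sq_sub_le_sq_of_le_of_nonpos {α y z : ℝ} (hα : α ≤ 0) (hyz : y ≤ z)
    (h : (z - α) ^ 2 ≤ z ^ 2) : (y - α) ^ 2 ≤ y ^ 2 := by
  nlinarith [mul_le_mul_of_nonpos_left hyz hα]

theorem sq_sub_le_sq_of_le_of_nonneg {α y z : ℝ} (hα : 0 ≤ α) (hyz : y ≤ z)
    (h : (y - α) ^ 2 ≤ y ^ 2) : (z - α) ^ 2 ≤ z ^ 2 := by
  nlinarith [mul_le_mul_of_nonneg_left hyz hα]

theorem mean_activeSet_mem {n : ℕ} {x : ℕ → ℝ}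
    (hx : ∀ j ∈ Icc 1 n, ∀ k ∈ Icc 1 n, k ≤ j → x k ≤ x j) (α : ℝ) :
    (∑ j ∈ activeSet (Icc 1 n) x α, x j) / (activeSet (Icc 1 n) x α).card ∈
      insert (0 : ℝ)
        (((Icc 1 n).image fun i => (∑ j ∈ Icc 1 i, x j) / (i : ℝ)) ∪
          ((Icc 1 n).image fun i => (∑ j ∈ Icc i n, x j) / ((n : ℝ) - i + 1))) := by
  rcases (activeSet (Icc 1 n) x α).eq_empty_or_nonempty with hempty | hne
  · simp [hempty] -- the mean of the empty set is `0 / 0 = 0`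
  refine mem_insert_of_mem ?_
  rcases le_total α 0 with hα | hα
  · obtain ⟨i, hi, heq⟩ := exists_filter_Icc_eq_Icc_of_lowerClosed
      (fun j hj k hk hkj => sq_sub_le_sq_of_le_of_nonpos hα (hx j hj k hk hkj)) hne
    refine mem_union_left _ (mem_image.mpr ⟨i, hi, ?_⟩)
    simp [activeSet, heq]
  · obtain ⟨i, hi, heq⟩ := exists_filter_Icc_eq_Icc_of_upperClosed
      (fun j hj k hk hjk => sq_sub_le_sq_of_le_of_nonneg hα (hx k hk j hj hjk)) hne
    refine mem_union_right _ (mem_image.mpr ⟨i, hi, ?_⟩)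
    have hin := (mem_Icc.mp hi).2
    rw [activeSet, heq, Nat.card_Icc, Nat.cast_sub (by omega)]
    push_cast
    ring_nf

/-- Proposition 1 + Lemma 2: the mixed continuous–binary problem
`min_{α∈ℝ, s∈{0,1}^n} ‖x − αs‖²` reduces to evaluating the piecewise-quadratic
objective `f(α) = min_s ‖x − αs‖²` over the finite candidate set consisting of
the prefix means, the suffix means, and `α = 0` (which yields `s = 0`). -/
theorem stmt_16 (n : ℕ) (x : ℕ → ℝ)
    (hmono : ∀ j k, 1 ≤ j → j ≤ k → k ≤ n → x j ≤ x k)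
    (f : ℝ → ℝ)
    (hf : ∀ α, f α =
      ⨅ s : ℕ → Bool, ∑ j ∈ Finset.Icc 1 n, (x j - α * (if s j then 1 else 0)) ^ 2)
    (A : Finset ℝ)
    (hA : A = insert (0 : ℝ)
      (((Finset.Icc 1 n).image fun i => (∑ j ∈ Finset.Icc 1 i, x j) / (i : ℝ)) ∪
       ((Finset.Icc 1 n).image fun i =>
          (∑ j ∈ Finset.Icc i n, x j) / ((n : ℝ) - i + 1)))) :
    A.Nonempty ∧ A.card ≤ 2 * n + 1 ∧
      ∀ hA' : A.Nonempty, (⨅ α : ℝ, f α) = A.inf' hA' f := by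
  subst hA
  have hf_eq : f = binaryFitError (Icc 1 n) x := funext fun α => by
    rw [hf, ciInf_sum_bool_eq_sum_min (Icc 1 n) fun j b => (x j - α * if b then 1 else 0) ^ 2]
    simp [binaryFitError]
  have hx : ∀ j ∈ Icc 1 n, ∀ k ∈ Icc 1 n, k ≤ j → x k ≤ x j := fun j hj k hk hkj =>
    hmono k j (mem_Icc.mp hk).1 hkj (mem_Icc.mp hj).2
  refine ⟨insert_nonempty _ _, ?_, fun hA' => ?_⟩
  · calc _ ≤ #(Icc 1 n) + #(Icc 1 n) + 1 := by
          grw [card_insert_le, card_union_le, card_image_le, card_image_le]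
      _ = 2 * n + 1 := by rw [Nat.card_Icc]; omega
  · rw [hf_eq]
    exact ciInf_eq_inf'_of_forall_exists_le hA' fun α =>
      ⟨_, mean_activeSet_mem hx α, binaryFitError_mean_activeSet_le _ x α⟩
end
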